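/- arXiv:1609.07684 — 3 statements merged into one kernel-verified Lean document; each statement's English description precedes it below -/
import Mathlib

section
/- Every instance of the schema NSVOR, namely ◇_i(φ∧ψ) ∧ ∇_i(φ,d) ∧ ∇_i(ψ,d) → ∇_i(φ∨ψ,d), is valid on the class K of all models. -/
/-- Formulas of the language LKvr: ⊤, proposition letters, ¬, ∧, □_i, ∇_i(·,d).
Proposition letters, agents, and constant symbols are all drawn from ℕ
(countably infinite sets). -/
inductive Formula : Type
  | top : Formula
  | atom : ℕ → Formula
  | neg : Formula → Formula
  | and : Formula → Formula → Formula
  | box : ℕ → Formula → Formula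
  | nabla : ℕ → Formula → ℕ → Formula
  deriving DecidableEq

namespace Formula

/-- ⊥ := ¬⊤ -/
def bot : Formula := neg top
/-- φ∨ψ := ¬(¬φ∧¬ψ) -/
def or (φ ψ : Formula) : Formula := neg (and (neg φ) (neg ψ))
/-- φ→ψ := ¬(φ∧¬ψ) -/
def imp (φ ψ : Formula) : Formula := neg (and φ (neg ψ))
/-- ◇_iφ := ¬□_i¬φ -/
def dia (i : ℕ) (φ : Formula) : Formula := neg (box i (neg φ))
/-- φ↔ψ := (φ→ψ)∧(ψ→φ) -/
def iff (φ ψ : Formula) : Formula := and (imp φ ψ) (imp ψ φ)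

/-- `subst ψ χ φ` is φ[ψ/χ]: the result of replacing every (outermost)
occurrence of ψ as a subformula of φ by χ. -/
def subst (ψ χ : Formula) : Formula → Formula
  | top => if top = ψ then χ else top
  | atom p => if atom p = ψ then χ else atom p
  | neg α => if neg α = ψ then χ else neg (subst ψ χ α)
  | and α β => if and α β = ψ then χ else and (subst ψ χ α) (subst ψ χ β)
  | box i α => if box i α = ψ then χ else box i (subst ψ χ α)
  | nabla i α d => if nabla i α d = ψ then χ else nabla i (subst ψ χ α) d

end Formula

/-- φ is an instance of a propositional tautology: it is true under every
assignment of truth values that respects ⊤, ¬ and ∧. -/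
def Taut (φ : Formula) : Prop :=
  ∀ v : Formula → Prop,
    v Formula.top →
    (∀ ψ, v (Formula.neg ψ) ↔ ¬ v ψ) →
    (∀ ψ χ, v (Formula.and ψ χ) ↔ (v ψ ∧ v χ)) →
    v φ

/-- Derivability in the proof system SLKvr. -/
inductive Derivable : Formula → Prop
  | taut {φ : Formula} : Taut φ → Derivable φ
  | axK (i : ℕ) (φ ψ : Formula) :
      Derivable ((Formula.box i (φ.imp ψ)).imp ((Formula.box i φ).imp (Formula.box i ψ)))
  | distNsv (i : ℕ) (φ ψ : Formula) (d : ℕ) :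
      Derivable ((Formula.box i (φ.imp ψ)).imp ((Formula.nabla i ψ d).imp (Formula.nabla i φ d)))
  | nsvBot (i d : ℕ) : Derivable (Formula.nabla i Formula.bot d)
  | nsvOr (i : ℕ) (φ ψ : Formula) (d : ℕ) :
      Derivable ((((Formula.dia i (φ.and ψ)).and (Formula.nabla i φ d)).and
        (Formula.nabla i ψ d)).imp (Formula.nabla i (φ.or ψ) d))
  | mp {φ ψ : Formula} : Derivable (φ.imp ψ) → Derivable φ → Derivable ψ
  | nec {φ : Formula} (i : ℕ) : Derivable φ → Derivable (Formula.box i φ)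
  | re {ψ χ : Formula} (φ : Formula) :
      Derivable (ψ.iff χ) → Derivable (φ.iff (Formula.subst ψ χ φ))

/-- A Kripke model with values: worlds W, values O, relations R_i,
propositional valuation V and value assignment VD. -/
structure Model where
  W : Type
  O : Type
  R : ℕ → W → W → Prop
  V : ℕ → W → Prop
  VD : ℕ → W → O

/-- Membership in the class K of all models: the sets of worlds and of values
are nonempty. -/
def Model.inK (M : Model) : Prop := Nonempty M.W ∧ Nonempty M.O

/-- Satisfaction. -/
def Sat (M : Model) : M.W → Formula → Prop
  | _, Formula.top => True
  | s, Formula.atom p => M.V p s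
  | s, Formula.neg φ => ¬ Sat M s φ
  | s, Formula.and φ ψ => Sat M s φ ∧ Sat M s ψ
  | s, Formula.box i φ => ∀ t, M.R i s t → Sat M t φ
  | s, Formula.nabla i φ d =>
      ∀ t₁ t₂, M.R i s t₁ → M.R i s t₂ → Sat M t₁ φ → Sat M t₂ φ →
        M.VD d t₁ = M.VD d t₂

/-- Validity on the class K of all models. -/
def Valid (φ : Formula) : Prop := ∀ M : Model, M.inK → ∀ s : M.W, Sat M s φ

/-- Conjunction of a nonempty list of formulas (φ₁∧…∧φₙ). -/
def conj : List Formula → Formula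
  | [] => Formula.top
  | [φ] => φ
  | φ :: ψ :: l => φ.and (conj (ψ :: l))

/-- Γ is consistent w.r.t. SLKvr: there is no finite subset {φ₁,…,φₙ} ⊆ Γ
(n ≥ 1) such that ¬(φ₁∧…∧φₙ) is derivable. -/
def Consistent (Γ : Set Formula) : Prop :=
  ¬ ∃ l : List Formula, l ≠ [] ∧ (∀ φ ∈ l, φ ∈ Γ) ∧ Derivable (Formula.neg (conj l))

/-- Maximal consistent set: consistent, and every proper superset is
inconsistent. -/
def MCS (Γ : Set Formula) : Prop :=
  Consistent Γ ∧ ∀ Δ : Set Formula, Γ ⊂ Δ → ¬ Consistent Δ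

/-- φ is derivable from Γ: there is a finite subset {ψ₁,…,ψₙ} ⊆ Γ with
(ψ₁∧…∧ψₙ)→φ derivable in SLKvr. -/
def DerivableFrom (Γ : Set Formula) (φ : Formula) : Prop :=
  ∃ l : List Formula, (∀ ψ ∈ l, ψ ∈ Γ) ∧ Derivable ((conj l).imp φ)

/-- A world of the canonical model of SLKvr: a triple ⟨Γ,f,g⟩ with Γ an MCS,
f : D → ℕ, g : Ag×LKvr×D → ℕ∪{*} (with `none` playing the role of *)
satisfying conditions (1) and (2). -/
structure CWorld where
  Γ : Set Formula
  f : ℕ → ℕ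
  g : ℕ → Formula → ℕ → Option ℕ
  mcs : MCS Γ
  cond1 : ∀ i φ d, g i φ d ≠ none ↔ (Formula.nabla i φ d).and (Formula.dia i φ) ∈ Γ
  cond2 : ∀ i φ ψ d, g i φ d ≠ none → g i ψ d ≠ none →
      (g i φ d = g i ψ d ↔ Formula.nabla i (φ.or ψ) d ∈ Γ)

/-- The canonical relation: s R_i t iff (3) {φ : □_iφ ∈ Γ_s} ⊆ Γ_t and
(4) whenever ∇_i(φ,d) ∈ Γ_s and φ ∈ Γ_t, then f_t(d) = g_s(i,φ,d). -/
def CRel (i : ℕ) (s t : CWorld) : Prop :=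
  (∀ φ, Formula.box i φ ∈ s.Γ → φ ∈ t.Γ) ∧
  (∀ φ d, Formula.nabla i φ d ∈ s.Γ → φ ∈ t.Γ → s.g i φ d = some (t.f d))

/-- The canonical model of SLKvr. -/
def CModel : Model where
  W := CWorld
  O := ℕ
  R := CRel
  V := fun p s => Formula.atom p ∈ s.Γ
  VD := fun d s => s.f d

/-! The `◇_i(φ∧ψ)`-witness `u` satisfies both `φ` and `ψ`, so by the two `∇`-hypotheses every
`φ`-successor and every `ψ`-successor of `s` carries the value of `d` at `u`. -/

section Sat

variable {M : Model} {s : M.W} {i d : ℕ} {φ ψ : Formula}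

theorem sat_imp : Sat M s (φ.imp ψ) ↔ (Sat M s φ → Sat M s ψ) := by
  simp only [Formula.imp, Sat, not_and, not_not]

theorem sat_or : Sat M s (φ.or ψ) ↔ Sat M s φ ∨ Sat M s ψ := by
  simp only [Formula.or, Sat, not_and, not_not]
  tauto

theorem sat_dia : Sat M s (Formula.dia i φ) ↔ ∃ t, M.R i s t ∧ Sat M t φ := by
  simp only [Formula.dia, Sat, not_forall, not_not, exists_prop]

theorem sat_nabla_of_forall_eq (o : M.O) (h : ∀ t, M.R i s t → Sat M t φ → M.VD d t = o) :
    Sat M s (Formula.nabla i φ d) :=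
  fun t₁ t₂ h₁ h₂ hφ₁ hφ₂ => (h t₁ h₁ hφ₁).trans (h t₂ h₂ hφ₂).symm

theorem sat_nabla_or_of_sat_and {u : M.W} (hu : M.R i s u) (huφ : Sat M u φ) (huψ : Sat M u ψ)
    (hφ : Sat M s (Formula.nabla i φ d)) (hψ : Sat M s (Formula.nabla i ψ d)) :
    Sat M s (Formula.nabla i (φ.or ψ) d) := by
  refine sat_nabla_of_forall_eq (M.VD d u) fun t ht htφψ => ?_
  rcases sat_or.1 htφψ with htφ | htψ
  · exact hφ t u ht hu htφ huφ
  · exact hψ t u ht hu htψ huψ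

end Sat

/-- every instance of NSVOR,
◇_i(φ∧ψ) ∧ ∇_i(φ,d) ∧ ∇_i(ψ,d) → ∇_i(φ∨ψ,d), is valid on the class K. -/
theorem nsvOr_valid (i : ℕ) (φ ψ : Formula) (d : ℕ) :
    Valid ((((Formula.dia i (φ.and ψ)).and (Formula.nabla i φ d)).and
      (Formula.nabla i ψ d)).imp (Formula.nabla i (φ.or ψ) d)) := by
  intro M _ s
  rw [sat_imp]
  rintro ⟨⟨hdia, hφ⟩, hψ⟩
  obtain ⟨u, hu, huφ, huψ⟩ := sat_dia.1 hdia
  exact sat_nabla_or_of_sat_and hu huφ huψ hφ hψ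
end

section
/- Let Γ be a maximal consistent set with respect to SLKvr, let i be an agent and d a constant symbol, and let G(i,d) = {φ : ∇_i(φ,d)∧◇_iφ ∈ Γ}. Define φ ~ ψ for φ,ψ ∈ G(i,d) iff ∇_i(φ∨ψ,d) ∈ Γ. Then ~ is an equivalence relation on G(i,d) (reflexive, symmetric, and transitive). -/
/-! Reflexivity and symmetry hold because `φ ∨ φ` and `ψ ∨ φ` are propositionally equivalent to
`φ` and `φ ∨ ψ`, so DISTNSV transfers `∇_i` along them. For transitivity, `◇_i ψ` yields
`◇_i((φ ∨ ψ) ∧ (ψ ∨ χ))`, so NSVOR combines `∇_i(φ ∨ ψ, d)` and `∇_i(ψ ∨ χ, d)` into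
`∇_i((φ ∨ ψ) ∨ (ψ ∨ χ), d)`, and `φ ∨ χ` implies that disjunction. -/

open Formula (box dia nabla)

namespace Derivable

theorem imp_trans {a b c : Formula} (hab : Derivable (a.imp b)) (hbc : Derivable (b.imp c)) :
    Derivable (a.imp c) := by
  have t : Taut ((a.imp b).imp ((b.imp c).imp (a.imp c))) := fun v _ hN hA => by
    simp only [Formula.imp, hN, hA]
    tauto
  exact ((taut t).mp hab).mp hbc

theorem conj_imp_of_mem : ∀ {l : List Formula} {a : Formula}, a ∈ l → Derivable ((conj l).imp a)
  | [_], a, h => by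
    obtain rfl := List.mem_singleton.mp h
    exact taut fun v _ hN hA => by simp only [Formula.imp, conj, hN, hA]; tauto
  | b :: c :: l, a, h => by
    rcases List.mem_cons.mp h with rfl | h
    · exact taut fun v _ hN hA => by simp only [Formula.imp, conj, hN, hA]; tauto
    · have htail : Derivable ((conj (b :: c :: l)).imp (conj (c :: l))) :=
        taut fun v _ hN hA => by simp only [Formula.imp, conj, hN, hA]; tauto
      exact htail.imp_trans (conj_imp_of_mem h)

theorem imp_conj : ∀ {l : List Formula} {c : Formula},
    (∀ a ∈ l, Derivable (c.imp a)) → Derivable (c.imp (conj l))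
  | [], c, _ => taut fun v hT hN hA => by simp only [Formula.imp, conj, hN, hA]; tauto
  | [b], c, h => h b (List.mem_singleton_self b)
  | b :: b' :: l, c, h => by
    have hhead := h b List.mem_cons_self
    have htail := imp_conj (l := b' :: l) fun a ha => h a (List.mem_cons_of_mem _ ha)
    have t : Taut ((c.imp b).imp ((c.imp (conj (b' :: l))).imp (c.imp (conj (b :: b' :: l))))) :=
      fun v _ hN hA => by simp only [Formula.imp, conj, hN, hA]; tauto
    exact ((taut t).mp hhead).mp htail

theorem neg_of_imp_neg {a b : Formula} (hab : Derivable (a.imp b)) (hb : Derivable b.neg) :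
    Derivable a.neg := by
  have t : Taut ((a.imp b).imp (b.neg.imp a.neg)) := fun v _ hN hA => by
    simp only [Formula.imp, hN, hA]
    tauto
  exact ((taut t).mp hab).mp hb

theorem nabla_anti {φ ψ : Formula} (i d : ℕ) (h : Derivable (φ.imp ψ)) :
    Derivable ((nabla i ψ d).imp (nabla i φ d)) :=
  (distNsv i φ ψ d).mp (nec i h)

theorem dia_mono {φ ψ : Formula} (i : ℕ) (h : Derivable (φ.imp ψ)) :
    Derivable ((dia i φ).imp (dia i ψ)) := by
  have hcontra : Derivable (ψ.neg.imp φ.neg) := by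
    have t : Taut ((φ.imp ψ).imp (ψ.neg.imp φ.neg)) := fun v _ hN hA => by
      simp only [Formula.imp, hN, hA]
      tauto
    exact (taut t).mp h
  have hbox : Derivable ((box i ψ.neg).imp (box i φ.neg)) := (axK i _ _).mp (nec i hcontra)
  have t : Taut (((box i ψ.neg).imp (box i φ.neg)).imp ((dia i φ).imp (dia i ψ))) :=
    fun v _ hN hA => by
      simp only [Formula.imp, Formula.dia, hN, hA]
      tauto
  exact (taut t).mp hbox

end Derivable

namespace MCS

variable {Γ : Set Formula}

theorem mem_of_derivable_conj_imp (hΓ : MCS Γ) {l : List Formula} (hl : l ≠ [])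
    (hlΓ : ∀ a ∈ l, a ∈ Γ) {ψ : Formula} (h : Derivable ((conj l).imp ψ)) : ψ ∈ Γ := by
  classical
  by_contra hψ
  obtain ⟨m, -, hmΓ, hm⟩ := not_not.mp (hΓ.2 _ (Set.ssubset_insert hψ))
  -- Replace `ψ` in the refuted list `m` by the premises `l`, which derive it.
  set L := l ++ m.filter (· ≠ ψ)
  have hLΓ : ∀ a ∈ L, a ∈ Γ := by
    intro a ha
    rcases List.mem_append.mp ha with ha | ha
    · exact hlΓ a ha
    · obtain ⟨ham, hne⟩ := List.mem_filter.mp ha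
      exact (hmΓ a ham).resolve_left (by simpa using hne)
  have hLl : Derivable ((conj L).imp (conj l)) :=
    Derivable.imp_conj fun b hb => Derivable.conj_imp_of_mem (List.mem_append_left _ hb)
  have hLψ : Derivable ((conj L).imp ψ) := hLl.imp_trans h
  have hLm : Derivable ((conj L).imp (conj m)) := by
    refine Derivable.imp_conj fun a ha => ?_
    by_cases hne : a = ψ
    · exact hne ▸ hLψ
    · exact Derivable.conj_imp_of_mem
        (List.mem_append_right _ (List.mem_filter.mpr ⟨ha, by simpa using hne⟩))
  exact hΓ.1 ⟨L, by simp [L, hl], hLΓ, Derivable.neg_of_imp_neg hLm hm⟩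

theorem mem_of_imp (hΓ : MCS Γ) {φ ψ : Formula} (hφ : φ ∈ Γ) (h : Derivable (φ.imp ψ)) :
    ψ ∈ Γ :=
  hΓ.mem_of_derivable_conj_imp (l := [φ]) (List.cons_ne_nil _ _) (by simpa using hφ) h

theorem and_mem (hΓ : MCS Γ) {φ ψ : Formula} (hφ : φ ∈ Γ) (hψ : ψ ∈ Γ) : φ.and ψ ∈ Γ :=
  hΓ.mem_of_derivable_conj_imp (l := [φ, ψ]) (List.cons_ne_nil _ _)
    (by simp [hφ, hψ]) (Derivable.taut fun v _ hN hA => by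
      simp only [Formula.imp, conj, hN, hA]
      tauto)

theorem left_mem_of_and_mem (hΓ : MCS Γ) {φ ψ : Formula} (h : φ.and ψ ∈ Γ) : φ ∈ Γ :=
  hΓ.mem_of_imp h (Derivable.taut fun v _ hN hA => by simp only [Formula.imp, hN, hA]; tauto)

theorem right_mem_of_and_mem (hΓ : MCS Γ) {φ ψ : Formula} (h : φ.and ψ ∈ Γ) : ψ ∈ Γ :=
  hΓ.mem_of_imp h (Derivable.taut fun v _ hN hA => by simp only [Formula.imp, hN, hA]; tauto)

variable {i d : ℕ}

theorem nabla_or_self (hΓ : MCS Γ) {φ : Formula} (h : nabla i φ d ∈ Γ) :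
    nabla i (φ.or φ) d ∈ Γ :=
  hΓ.mem_of_imp h <| Derivable.nabla_anti i d <| Derivable.taut fun v _ hN hA => by
    simp only [Formula.imp, Formula.or, hN, hA]
    tauto

theorem nabla_or_comm (hΓ : MCS Γ) {φ ψ : Formula} (h : nabla i (φ.or ψ) d ∈ Γ) :
    nabla i (ψ.or φ) d ∈ Γ :=
  hΓ.mem_of_imp h <| Derivable.nabla_anti i d <| Derivable.taut fun v _ hN hA => by
    simp only [Formula.imp, Formula.or, hN, hA]
    tauto

theorem nabla_or_trans (hΓ : MCS Γ) {φ ψ χ : Formula} (hψ : dia i ψ ∈ Γ)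
    (hφψ : nabla i (φ.or ψ) d ∈ Γ) (hψχ : nabla i (ψ.or χ) d ∈ Γ) : nabla i (φ.or χ) d ∈ Γ := by
  have hdia : dia i ((φ.or ψ).and (ψ.or χ)) ∈ Γ :=
    hΓ.mem_of_imp hψ <| Derivable.dia_mono i <| Derivable.taut fun v _ hN hA => by
      simp only [Formula.imp, Formula.or, hN, hA]
      tauto
  have hunion : nabla i ((φ.or ψ).or (ψ.or χ)) d ∈ Γ :=
    hΓ.mem_of_imp (hΓ.and_mem (hΓ.and_mem hdia hφψ) hψχ) (Derivable.nsvOr i _ _ d)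
  exact hΓ.mem_of_imp hunion <| Derivable.nabla_anti i d <| Derivable.taut fun v _ hN hA => by
    simp only [Formula.imp, Formula.or, hN, hA]
    tauto

end MCS

/-- for an MCS Γ, the relation φ ~ ψ iff ∇_i(φ∨ψ,d) ∈ Γ is an
equivalence relation on G(i,d) = {φ : ∇_i(φ,d)∧◇_iφ ∈ Γ}. -/
theorem sim_is_equivalence (Γ : Set Formula) (hΓ : MCS Γ) (i d : ℕ) :
    let G : Set Formula := {φ | (Formula.nabla i φ d).and (Formula.dia i φ) ∈ Γ}
    let r : Formula → Formula → Prop := fun φ ψ => Formula.nabla i (φ.or ψ) d ∈ Γ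
    (∀ φ ∈ G, r φ φ) ∧
    (∀ φ ∈ G, ∀ ψ ∈ G, r φ ψ → r ψ φ) ∧
    (∀ φ ∈ G, ∀ ψ ∈ G, ∀ χ ∈ G, r φ ψ → r ψ χ → r φ χ) :=
  ⟨fun _ hφ => hΓ.nabla_or_self (hΓ.left_mem_of_and_mem hφ),
    fun _ _ _ _ => hΓ.nabla_or_comm,
    fun _ _ _ hψ _ _ => hΓ.nabla_or_trans (hΓ.right_mem_of_and_mem hψ)⟩
end

section
/- Let s be a maximal consistent set with respect to SLKvr with ¬∇_i(ψ,d) ∈ s, and let A⁺ = {φ : □_iφ ∈ s} ∪ {ψ}. Then A⁺ is consistent with respect to SLKvr. -/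
/-
A derivation of ¬(φ₁ ∧ … ∧ φₙ) from formulas of A⁺ yields, after moving ψ to the right,
⊢ φ₁ ∧ … ∧ φₖ → ¬ψ with each □_iφⱼ ∈ s. Distributing □_i over this implication gives
⊢ □_iφ₁ ∧ … ∧ □_iφₖ → □_i¬ψ, and □_i¬ψ = □_i(ψ → ⊥) entails ∇_i(ψ,d) by DISTNSV and NSVBOT.
So s derives ∇_i(ψ,d) while containing its negation, contradicting the consistency of s.
-/

open Formula

lemma conj_eval (v : Formula → Prop) (ht : v top)
    (ha : ∀ ψ χ, v (and ψ χ) ↔ (v ψ ∧ v χ)) (l : List Formula) :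
    v (conj l) ↔ ∀ φ ∈ l, v φ := by
  induction l with
  | nil => simpa [conj]
  | cons φ l ih =>
    cases l with
    | nil => simp [conj]
    | cons ψ l => simp_all [conj]

namespace Derivable

lemma of_taut_imp {φ ψ : Formula} (t : Taut (φ.imp ψ)) (h : Derivable φ) : Derivable ψ :=
  mp (taut t) h

lemma imp_trans_s17 {φ ψ χ : Formula} (h₁ : Derivable (φ.imp ψ)) (h₂ : Derivable (ψ.imp χ)) :
    Derivable (φ.imp χ) :=
  mp (of_taut_imp (fun v _ hn ha => by simp only [imp, hn, ha]; tauto) h₁) h₂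

lemma conj_map_box_imp_box (i : ℕ) {χ : Formula} :
    ∀ {l : List Formula}, Derivable ((conj l).imp χ) →
      Derivable ((conj (l.map (box i))).imp (box i χ))
  | [], h => by
    have hχ : Derivable χ := mp h (taut fun _ ht _ _ => ht)
    exact of_taut_imp (fun v _ hn ha => by simp only [imp, hn, ha]; tauto) (nec i hχ)
  | φ :: l, h => by
    have hcurry : Derivable ((conj l).imp (φ.imp χ)) := of_taut_imp (fun v ht hn ha => by
      simp only [imp, hn, ha, conj_eval v ht ha, List.forall_mem_cons]; tauto) h
    have hK := imp_trans_s17 (conj_map_box_imp_box i hcurry) (axK i φ χ)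
    exact of_taut_imp (fun v ht hn ha => by
      simp only [imp, hn, ha, conj_eval v ht ha, List.map_cons, List.forall_mem_cons]; tauto) hK

lemma box_neg_imp_nabla (i : ℕ) (ψ : Formula) (d : ℕ) :
    Derivable ((box i (neg ψ)).imp (nabla i ψ d)) := by
  have hbox : Derivable ((box i (neg ψ)).imp (box i (ψ.imp bot))) :=
    mp (axK i _ _) (nec i (taut fun v _ hn ha => by simp only [imp, bot, hn, ha]; tauto))
  have hdist : Derivable ((box i (ψ.imp bot)).imp (nabla i ψ d)) :=
    mp (of_taut_imp (fun v _ hn ha => by simp only [imp, hn, ha]; tauto) (distNsv i ψ bot d))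
      (nsvBot i d)
  exact imp_trans_s17 hbox hdist

lemma conj_filter_ne_imp_neg {l : List Formula} {ψ : Formula} (h : Derivable (neg (conj l))) :
    Derivable ((conj (l.filter (· ≠ ψ))).imp (neg ψ)) := by
  refine of_taut_imp (fun v ht hn ha => ?_) h
  simp only [imp, hn, ha, conj_eval v ht ha, List.mem_filter, not_not]
  rintro ⟨hl, hm, hψ⟩
  exact hl fun φ hφ => if hφψ : φ = ψ then hφψ ▸ hψ else hm φ ⟨hφ, by simpa using hφψ⟩

end Derivable

lemma Consistent.not_derivable_conj_imp {Γ : Set Formula} (hΓ : Consistent Γ)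
    {l : List Formula} (hl : ∀ φ ∈ l, φ ∈ Γ) {χ : Formula} (hχ : neg χ ∈ Γ) :
    ¬ Derivable ((conj l).imp χ) := fun h =>
  hΓ ⟨neg χ :: l, List.cons_ne_nil _ _, List.forall_mem_cons.2 ⟨hχ, hl⟩,
    Derivable.of_taut_imp (fun v ht hn ha => by
      simp only [imp, hn, ha, conj_eval v ht ha, List.forall_mem_cons]; tauto) h⟩

/-- if s is an MCS with ¬∇_i(ψ,d) ∈ s, then
A⁺ = {φ : □_iφ ∈ s} ∪ {ψ} is consistent. -/
theorem aplus_consistent (s : Set Formula) (hs : MCS s) (i : ℕ) (ψ : Formula)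
    (d : ℕ) (h : Formula.neg (Formula.nabla i ψ d) ∈ s) :
    Consistent ({φ | Formula.box i φ ∈ s} ∪ {ψ}) := by
  rintro ⟨l, -, hl, hder⟩
  have hboxes : ∀ φ ∈ (l.filter (· ≠ ψ)).map (box i), φ ∈ s := by
    simp only [List.mem_map, List.mem_filter, forall_exists_index, and_imp]
    rintro _ φ hφ hφψ rfl
    exact (hl φ hφ).resolve_right (by simpa using hφψ)
  exact hs.1.not_derivable_conj_imp hboxes h <| Derivable.imp_trans_s17
    (Derivable.conj_map_box_imp_box i (Derivable.conj_filter_ne_imp_neg hder))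
    (Derivable.box_neg_imp_nabla i ψ d)
end
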